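/- Let G_ℓ(n) = ∑_{k≥ℓ} R_k(n) be the number of runs of 1's of length at least ℓ among the first n tosses. Then for every r ≥ 1 and n ≥ 0, E[C(G_ℓ(n), r)] = p^{ℓr} q^{r-1} [C(n+1-ℓr, r) - p·C(n-ℓr, r)], where C(a,b) is the binomial coefficient (taken as 0 when b > a or a < 0). -/

import Mathlib

open scoped Classical
open Finset Filter

noncomputable section

/-- Weight (probability) of a Boolean string of length `n` under i.i.d. Bernoulli(p). -/
def wt (p : ℝ) {n : ℕ} (x : Fin n → Bool) : ℝ :=
  ∏ i, (if x i then p else 1 - p)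

/-- Extend a finite string by `false`. -/
def pad {n : ℕ} (x : Fin n → Bool) : ℕ → Bool :=
  fun i => if h : i < n then x ⟨i, h⟩ else false

/-- A maximal run of 1's of length exactly `ℓ` starts at position `i` (0-indexed)
within the first `n` positions. -/
def IsRunAt (x : ℕ → Bool) (n i ℓ : ℕ) : Prop :=
  1 ≤ ℓ ∧ i + ℓ ≤ n ∧ (∀ k < ℓ, x (i + k) = true) ∧
    (i = 0 ∨ x (i - 1) = false) ∧ (i + ℓ = n ∨ x (i + ℓ) = false)

/-- `R_ℓ(n)`: the number of maximal runs of 1's of length exactly `ℓ` in the first `n` tosses. -/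
def runCount (x : ℕ → Bool) (n ℓ : ℕ) : ℕ :=
  ((Finset.range n).filter (fun i => IsRunAt x n i ℓ)).card

/-- `G_ℓ(n)`: the number of maximal runs of 1's of length at least `ℓ` in the first `n` tosses. -/
def excCount (x : ℕ → Bool) (n ℓ : ℕ) : ℕ :=
  ∑ k ∈ Finset.Icc ℓ n, runCount x n k

/-- `L(n)`: the length of the longest run of 1's in the first `n` tosses. -/
def longestRun (x : ℕ → Bool) (n : ℕ) : ℕ :=
  (Finset.range (n + 1)).sup
    (fun ℓ => if ∃ i, i + ℓ ≤ n ∧ ∀ k < ℓ, x (i + k) = true then ℓ else 0)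

/-- Expectation of a (real) functional of `n` i.i.d. Bernoulli(p) tosses. -/
def Ex (p : ℝ) (n : ℕ) (f : (ℕ → Bool) → ℝ) : ℝ :=
  ∑ x : Fin n → Bool, wt p x * f (pad x)

/-- Expectation of a complex functional of `n` i.i.d. Bernoulli(p) tosses. -/
def ExC (p : ℝ) (n : ℕ) (f : (ℕ → Bool) → ℂ) : ℂ :=
  ∑ x : Fin n → Bool, (wt p x : ℂ) * f (pad x)

/-- Probability of an event depending on the first `n` i.i.d. Bernoulli(p) tosses. -/
def Pr (p : ℝ) (n : ℕ) (A : Set (ℕ → Bool)) : ℝ :=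
  ∑ x : Fin n → Bool, if pad x ∈ A then wt p x else 0

/-- Binomial coefficient with integer upper argument, vanishing for negative upper argument. -/
def C (a : ℤ) (b : ℕ) : ℝ :=
  if a < 0 then 0 else (a.toNat).choose b

/-!
Count a long run by its start `i`: the window `[i, i + ℓ)` is all `1`'s and `i = 0` or
`ξ_{i-1} = 0`. One more toss after `m + ℓ` tosses creates a new long run exactly when the last
`ℓ + 1` tosses read `0 1 ⋯ 1`, an event of probability `q p^ℓ`, and on that event the long runs
seen so far are those of the first `m` tosses. With `C(G+1, r+1) = C(G, r+1) + C(G, r)` this gives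
`E C(G(m+ℓ+1), r+1) = E C(G(m+ℓ), r+1) + q p^ℓ E C(G(m), r)`,
and the closed form obeys the same recursion by Pascal's rule. The induction on `r` is run on
`q E C(G(m), r) = p^{ℓr} q^r [C(m+1-ℓr, r) - p C(m-ℓr, r)]`, which also holds for `r = 0` and
needs no division by `q`.
-/

lemma pad_append_of_lt {m k : ℕ} (y : Fin m → Bool) (w : Fin k → Bool) {i : ℕ} (hi : i < m) :
    pad (Fin.append y w) i = pad y i := by
  have hik : i < m + k := by omega
  rw [pad, pad, dif_pos hik, dif_pos hi]
  exact Fin.append_left y w ⟨i, hi⟩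

lemma pad_append_add {m k : ℕ} (y : Fin m → Bool) (w : Fin k → Bool) (j : Fin k) :
    pad (Fin.append y w) (m + j) = w j := by
  rw [pad, dif_pos (by omega)]
  exact Fin.append_right y w j

def DependsOnPrefix {β : Type*} (m : ℕ) (g : (ℕ → Bool) → β) : Prop :=
  ∀ a b : ℕ → Bool, (∀ i < m, a i = b i) → g a = g b

lemma DependsOnPrefix.comp {β γ : Type*} {m : ℕ} {g : (ℕ → Bool) → β}
    (hg : DependsOnPrefix m g) (φ : β → γ) : DependsOnPrefix m (fun x => φ (g x)) :=
  fun a b hab => congrArg φ (hg a b hab)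

lemma DependsOnPrefix.apply_pad_append {β : Type*} {m k : ℕ} {g : (ℕ → Bool) → β}
    (hg : DependsOnPrefix m g) (y : Fin m → Bool) (w : Fin k → Bool) :
    g (pad (Fin.append y w)) = g (pad y) :=
  hg _ _ fun _ hi => pad_append_of_lt y w hi

section Expectation

variable (p : ℝ)

lemma sum_wt (n : ℕ) : ∑ x : Fin n → Bool, wt p x = 1 := by
  simp only [wt]
  rw [← Fintype.prod_sum (fun (_ : Fin n) (b : Bool) => if b then p else 1 - p)]
  simp

lemma wt_append {m k : ℕ} (y : Fin m → Bool) (w : Fin k → Bool) :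
    wt p (Fin.append y w) = wt p y * wt p w := by
  simp [wt, Fin.prod_univ_add]

lemma Ex_const (n : ℕ) (c : ℝ) : Ex p n (fun _ => c) = c := by
  rw [Ex, ← Finset.sum_mul, sum_wt, one_mul]

lemma Ex_add (n : ℕ) (f g : (ℕ → Bool) → ℝ) :
    Ex p n (fun x => f x + g x) = Ex p n f + Ex p n g := by
  simp only [Ex, mul_add, Finset.sum_add_distrib]

lemma Ex_add_eq_sum_sum (m k : ℕ) (f : (ℕ → Bool) → ℝ) :
    Ex p (m + k) f = ∑ y : Fin m → Bool, ∑ w : Fin k → Bool,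
      wt p y * wt p w * f (pad (Fin.append y w)) := by
  rw [Ex, ← (Fin.appendEquiv m k).sum_comp, Fintype.sum_prod_type]
  simp only [← wt_append]
  rfl

lemma Ex_add_of_dependsOnPrefix {m : ℕ} {g : (ℕ → Bool) → ℝ} (hg : DependsOnPrefix m g) (k : ℕ) :
    Ex p (m + k) g = Ex p m g := by
  simp only [Ex_add_eq_sum_sum, hg.apply_pad_append]
  simp [Ex, mul_right_comm _ (wt p _), ← Finset.mul_sum, sum_wt]

lemma Ex_ite_suffix {m k : ℕ} {g : (ℕ → Bool) → ℝ} (hg : DependsOnPrefix m g) (z : Fin k → Bool) :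
    Ex p (m + k) (fun x => if ∀ j : Fin k, x (m + j) = z j then g x else 0) =
      wt p z * Ex p m g := by
  simp only [Ex_add_eq_sum_sum, hg.apply_pad_append, pad_append_add, ← funext_iff]
  simp [Ex, Finset.mul_sum, mul_comm, mul_left_comm]

end Expectation

/-- Unlike `IsRunAt`, this ignores the right end of the run, so it does not depend on `n`. -/
def IsLongRunStart (x : ℕ → Bool) (ℓ i : ℕ) : Prop :=
  (∀ k < ℓ, x (i + k) = true) ∧ (i = 0 ∨ x (i - 1) = false)

/-- The starts `i` of long runs inside the first `n` tosses are those with `i + ℓ ≤ n`,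
i.e. `i < n + 1 - ℓ`. -/
def longRunCount (x : ℕ → Bool) (n ℓ : ℕ) : ℕ :=
  Nat.count (IsLongRunStart x ℓ) (n + 1 - ℓ)

section Runs

variable {x : ℕ → Bool} {n i ℓ : ℕ}

lemma IsRunAt.isLongRunStart {k : ℕ} (h : IsRunAt x n i k) (hk : ℓ ≤ k) :
    i + ℓ ≤ n ∧ IsLongRunStart x ℓ i :=
  ⟨by have := h.2.1; omega, fun j hj => h.2.2.1 j (by omega), h.2.2.2.1⟩

lemma IsRunAt.le {k k' : ℕ} (h : IsRunAt x n i k) (h' : IsRunAt x n i k') : k ≤ k' := by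
  by_contra! hlt
  rcases h'.2.2.2.2 with hend | hend
  · have := h.2.1; omega
  · simp [h.2.2.1 k' hlt] at hend

lemma IsLongRunStart.exists_isRunAt (hℓ : 1 ≤ ℓ) (hn : i + ℓ ≤ n) (h : IsLongRunStart x ℓ i) :
    ∃ k, ℓ ≤ k ∧ IsRunAt x n i k := by
  let ones : ℕ → Prop := fun k => i + k ≤ n ∧ ∀ j < k, x (i + j) = true
  have hℓn : ℓ ≤ n := by omega
  have hones : ones ℓ := ⟨hn, h.1⟩
  set K := Nat.findGreatest ones n
  have hK : ones K := Nat.findGreatest_spec hℓn hones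
  have hℓK : ℓ ≤ K := Nat.le_findGreatest hℓn hones
  refine ⟨K, hℓK, by omega, hK.1, hK.2, h.2, ?_⟩
  by_contra! hmax
  refine Nat.findGreatest_is_greatest (Nat.lt_succ_self K) (by omega) ⟨by omega, fun j hj => ?_⟩
  rcases Nat.lt_or_ge j K with hj' | hj'
  · exact hK.2 j hj'
  · simpa [show j = K by omega] using hmax.2

lemma card_isRunAt_Icc (hℓ : 1 ≤ ℓ) (x : ℕ → Bool) (n i : ℕ) :
    #{k ∈ Icc ℓ n | IsRunAt x n i k} = if i + ℓ ≤ n ∧ IsLongRunStart x ℓ i then 1 else 0 := by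
  split_ifs with h
  · obtain ⟨k, hℓk, hk⟩ := h.2.exists_isRunAt hℓ h.1
    rw [Finset.card_eq_one]
    refine ⟨k, Finset.eq_singleton_iff_unique_mem.mpr ⟨?_, fun k' hk' => ?_⟩⟩
    · simp [hℓk, hk, show k ≤ n by have := hk.2.1; omega]
    · exact le_antisymm ((Finset.mem_filter.mp hk').2.le hk) (hk.le (Finset.mem_filter.mp hk').2)
  · rw [Finset.card_eq_zero, Finset.filter_eq_empty_iff]
    exact fun k hk hrun => h (hrun.isLongRunStart (Finset.mem_Icc.mp hk).1)

lemma excCount_eq_longRunCount (hℓ : 1 ≤ ℓ) (x : ℕ → Bool) (n : ℕ) :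
    excCount x n ℓ = longRunCount x n ℓ := by
  calc excCount x n ℓ
      = ∑ i ∈ range n, #{k ∈ Icc ℓ n | IsRunAt x n i k} := by
        simp only [excCount, runCount, Finset.card_filter]
        exact Finset.sum_comm
    _ = #{i ∈ range n | i + ℓ ≤ n ∧ IsLongRunStart x ℓ i} := by
        simp only [card_isRunAt_Icc hℓ, Finset.card_filter]
    _ = longRunCount x n ℓ := by
        rw [longRunCount, Nat.count_eq_card_filter_range]
        congr 1
        ext i
        simp only [Finset.mem_filter, Finset.mem_range, ← and_assoc]
        exact and_congr_left' (by omega)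

lemma isLongRunStart_congr {y : ℕ → Bool} (hxy : ∀ j < i + ℓ, x j = y j) :
    IsLongRunStart x ℓ i ↔ IsLongRunStart y ℓ i := by
  unfold IsLongRunStart
  rcases Nat.eq_zero_or_pos i with rfl | hi
  · simp +contextual [hxy]
  · simp +contextual [hxy, hxy (i - 1) (by omega), hi.ne']

lemma longRunCount_dependsOnPrefix (n ℓ : ℕ) :
    DependsOnPrefix n (fun x => longRunCount x n ℓ) := by
  intro a b hab
  simp only [longRunCount, Nat.count_eq_card_filter_range]
  congr 1
  refine Finset.filter_congr fun i hi => isLongRunStart_congr fun j hj => hab j ?_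
  simp only [Finset.mem_range] at hi
  omega

lemma longRunCount_of_lt (h : n < ℓ) : longRunCount x n ℓ = 0 := by
  rw [longRunCount, show n + 1 - ℓ = 0 by omega, Nat.count_zero]

lemma longRunCount_self : longRunCount x ℓ ℓ = if ∀ k < ℓ, x k = true then 1 else 0 := by
  simp [longRunCount, Nat.count_one, IsLongRunStart]

lemma longRunCount_add_succ (m : ℕ) :
    longRunCount x (m + ℓ + 1) ℓ =
      longRunCount x (m + ℓ) ℓ + if IsLongRunStart x ℓ (m + 1) then 1 else 0 := by
  rw [longRunCount, longRunCount, show m + ℓ + 1 + 1 - ℓ = m + 1 + 1 by omega,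
    show m + ℓ + 1 - ℓ = m + 1 by omega, Nat.count_succ]

/-- A `0` at position `m` rules out long-run starts in `(m - ℓ, m]`. -/
lemma longRunCount_add_of_eq_false {m : ℕ} (hm : x m = false) :
    longRunCount x (m + ℓ) ℓ = longRunCount x m ℓ := by
  rw [longRunCount, longRunCount, show m + ℓ + 1 - ℓ = (m + 1 - ℓ) + min ℓ (m + 1) by omega,
    Nat.count_add, add_eq_left, Nat.count_iff_forall_not]
  intro k hk hstart
  have := hstart.1 (m - (m + 1 - ℓ + k)) (by omega)
  rw [show m + 1 - ℓ + k + (m - (m + 1 - ℓ + k)) = m by omega, hm] at this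
  exact Bool.false_ne_true this

def gapThenRun (ℓ : ℕ) : Fin (ℓ + 1) → Bool :=
  Fin.cons false fun _ => true

lemma isLongRunStart_succ_iff (m : ℕ) :
    IsLongRunStart x ℓ (m + 1) ↔
      ∀ j : Fin (ℓ + 1), x (m + j) = gapThenRun ℓ j := by
  simp [IsLongRunStart, gapThenRun, Fin.forall_fin_succ, Fin.forall_iff, add_assoc, add_comm 1,
    and_comm]

end Runs

lemma C_of_nonpos {a : ℤ} (ha : a ≤ 0) {r : ℕ} (hr : 1 ≤ r) : C a r = 0 := by
  unfold C
  split_ifs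
  · rfl
  · rw [show a.toNat = 0 by omega, Nat.choose_eq_zero_of_lt (by omega), Nat.cast_zero]

lemma C_zero_right {a : ℤ} (ha : 0 ≤ a) : C a 0 = 1 := by
  simp [C, not_lt.mpr ha]

lemma C_succ_succ (a : ℤ) (r : ℕ) : C (a + 1) (r + 1) = C a (r + 1) + C a r := by
  unfold C
  rcases lt_trichotomy a (-1) with h | rfl | h
  · simp [show a + 1 < 0 by omega, h.trans (by norm_num : (-1 : ℤ) < 0)]
  · simp
  · rw [if_neg (by omega), if_neg (by omega), if_neg (by omega),
      show (a + 1).toNat = a.toNat + 1 by omega, Nat.choose_succ_succ, Nat.cast_add, add_comm]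

def momentBracket (p : ℝ) (ℓ r : ℕ) (m : ℤ) : ℝ :=
  C (m + 1 - ℓ * r) r - p * C (m - ℓ * r) r

section MomentBracket

variable (p : ℝ) {ℓ : ℕ}

lemma momentBracket_succ_succ (r : ℕ) (m : ℤ) :
    momentBracket p ℓ (r + 1) (m + 1) =
      momentBracket p ℓ (r + 1) m + momentBracket p ℓ r (m - ℓ) := by
  have pascal : ∀ a : ℤ, C (a + 1 - ℓ * ((r + 1 : ℕ) : ℤ)) (r + 1) =
      C (a - ℓ * ((r + 1 : ℕ) : ℤ)) (r + 1) + C (a - ℓ - ℓ * r) r := by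
    intro a
    rw [show a + 1 - ℓ * ((r + 1 : ℕ) : ℤ) = a - ℓ * ((r + 1 : ℕ) : ℤ) + 1 by ring, C_succ_succ,
      show a - ℓ * ((r + 1 : ℕ) : ℤ) = a - ℓ - ℓ * r by push_cast; ring]
  simp only [momentBracket]
  rw [pascal, pascal, show m + 1 - ℓ - ℓ * r = m - ℓ + 1 - ℓ * r by ring]
  ring

lemma momentBracket_zero {m : ℤ} (hm : 0 ≤ m) : momentBracket p ℓ 0 m = 1 - p := by
  simp [momentBracket, C_zero_right, hm, show 0 ≤ m + 1 by omega]

lemma momentBracket_of_le {r : ℕ} (hr : 1 ≤ r) {m : ℤ} (hm : m + 1 ≤ ℓ * r) :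
    momentBracket p ℓ r m = 0 := by
  simp [momentBracket, C_of_nonpos (by omega : m + 1 - ℓ * r ≤ 0) hr,
    C_of_nonpos (by omega : m - ℓ * r ≤ 0) hr]

lemma momentBracket_one_self : momentBracket p ℓ 1 ℓ = 1 := by
  simp [momentBracket, C]

end MomentBracket

section Moments

variable (p : ℝ) {ℓ : ℕ}

lemma wt_gapThenRun (ℓ : ℕ) : wt p (gapThenRun ℓ) = (1 - p) * p ^ ℓ := by
  simp [wt, gapThenRun, Fin.prod_univ_succ]

lemma Ex_choose_longRunCount_add_succ (m r : ℕ) :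
    Ex p (m + ℓ + 1) (fun x => ((longRunCount x (m + ℓ + 1) ℓ).choose (r + 1) : ℝ)) =
      Ex p (m + ℓ) (fun x => ((longRunCount x (m + ℓ) ℓ).choose (r + 1) : ℝ)) +
        (1 - p) * p ^ ℓ * Ex p m (fun x => ((longRunCount x m ℓ).choose r : ℝ)) := by
  have hpoint : ∀ x : ℕ → Bool,
      ((longRunCount x (m + ℓ + 1) ℓ).choose (r + 1) : ℝ) =
        ((longRunCount x (m + ℓ) ℓ).choose (r + 1) : ℝ) +
          if ∀ j : Fin (ℓ + 1), x (m + j) = gapThenRun ℓ j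
          then ((longRunCount x m ℓ).choose r : ℝ) else 0 := by
    intro x
    rw [longRunCount_add_succ]
    by_cases hstart : IsLongRunStart x ℓ (m + 1)
    · rw [if_pos hstart, if_pos ((isLongRunStart_succ_iff m).1 hstart),
        longRunCount_add_of_eq_false (by simpa using hstart.2), Nat.choose_succ_succ',
        Nat.cast_add, add_comm]
    · rw [if_neg hstart, if_neg (mt (isLongRunStart_succ_iff m).2 hstart), add_zero, add_zero]
  simp only [hpoint]
  rw [Ex_add, Ex_add_of_dependsOnPrefix p
      ((longRunCount_dependsOnPrefix (m + ℓ) ℓ).comp fun c => (c.choose (r + 1) : ℝ)) 1,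
    add_assoc m ℓ 1,
    Ex_ite_suffix p ((longRunCount_dependsOnPrefix m ℓ).comp fun c => (c.choose r : ℝ)),
    wt_gapThenRun]

lemma Ex_choose_longRunCount_self (r : ℕ) :
    Ex p ℓ (fun x => ((longRunCount x ℓ ℓ).choose (r + 1) : ℝ)) =
      p ^ ℓ * (Nat.choose 1 (r + 1) : ℝ) := by
  have hall := Ex_ite_suffix p (m := 0) (g := fun _ => (Nat.choose 1 (r + 1) : ℝ))
    (fun _ _ _ => rfl) (fun _ : Fin ℓ => true)
  simp only [zero_add, Ex_const] at hall
  convert hall using 2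
  · funext x
    simp only [longRunCount_self, Fin.forall_iff]
    split_ifs <;> simp
  · simp [wt]

lemma Ex_choose_longRunCount_succ (hℓ : 1 ≤ ℓ) (r : ℕ)
    (hlower : ∀ m : ℕ, (1 - p) * Ex p m (fun x => ((longRunCount x m ℓ).choose r : ℝ)) =
      p ^ (ℓ * r) * (1 - p) ^ r * momentBracket p ℓ r m) (n : ℕ) :
    Ex p n (fun x => ((longRunCount x n ℓ).choose (r + 1) : ℝ)) =
      p ^ (ℓ * (r + 1)) * (1 - p) ^ r * momentBracket p ℓ (r + 1) n := by
  induction n with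
  | zero =>
    rw [momentBracket_of_le p (Nat.le_add_left 1 r) (by push_cast; nlinarith)]
    simp [longRunCount_of_lt (show 0 < ℓ by omega), Ex_const]
  | succ n ih =>
    rcases lt_trichotomy (n + 1) ℓ with hlt | heq | hgt
    · rw [momentBracket_of_le p (Nat.le_add_left 1 r) (by push_cast; nlinarith)]
      simp [longRunCount_of_lt hlt, Ex_const]
    · subst heq
      rw [Ex_choose_longRunCount_self]
      rcases r with _ | r
      · rw [zero_add, momentBracket_one_self]
        simp
      · rw [momentBracket_of_le p (by omega) (by push_cast; nlinarith),
          Nat.choose_eq_zero_of_lt (by omega : 1 < r + 1 + 1)]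
        simp
    · obtain ⟨m, rfl⟩ : ∃ m, n = m + ℓ := ⟨n - ℓ, by omega⟩
      rw [Ex_choose_longRunCount_add_succ, ih, mul_comm (1 - p) (p ^ ℓ), mul_assoc (p ^ ℓ), hlower]
      push_cast
      rw [momentBracket_succ_succ, add_sub_cancel_right]
      ring

lemma one_sub_mul_Ex_choose_longRunCount (hℓ : 1 ≤ ℓ) (r m : ℕ) :
    (1 - p) * Ex p m (fun x => ((longRunCount x m ℓ).choose r : ℝ)) =
      p ^ (ℓ * r) * (1 - p) ^ r * momentBracket p ℓ r m := by
  induction r generalizing m with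
  | zero => simp [Ex_const, momentBracket_zero]
  | succ r ih =>
    rw [Ex_choose_longRunCount_succ p hℓ r ih]
    ring

end Moments

theorem stmt6_general (p : ℝ) (ℓ : ℕ) (hℓ : 1 ≤ ℓ)
    (r : ℕ) (hr : 1 ≤ r) (n : ℕ) :
    Ex p n (fun x => ((excCount x n ℓ).choose r : ℝ)) =
      p ^ (ℓ * r) * (1 - p) ^ (r - 1) *
        (C ((n : ℤ) + 1 - ℓ * r) r - p * C ((n : ℤ) - ℓ * r) r) := by
  obtain ⟨r, rfl⟩ : ∃ s, r = s + 1 := ⟨r - 1, by omega⟩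
  simp only [excCount_eq_longRunCount hℓ]
  exact Ex_choose_longRunCount_succ p hℓ r (one_sub_mul_Ex_choose_longRunCount p hℓ r) n

/-- binomial moments of the number of runs of length at least `ℓ`. -/
theorem stmt6 (p : ℝ) (hp : 0 < p) (hp1 : p < 1) (ℓ : ℕ) (hℓ : 1 ≤ ℓ)
    (r : ℕ) (hr : 1 ≤ r) (n : ℕ) :
    Ex p n (fun x => ((excCount x n ℓ).choose r : ℝ)) =
      p ^ (ℓ * r) * (1 - p) ^ (r - 1) *
        (C ((n : ℤ) + 1 - ℓ * r) r - p * C ((n : ℤ) - ℓ * r) r) :=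
  stmt6_general p ℓ hℓ r hr n
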